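/- Let 0 < s₁ < s₂. The families of functionals (𝒢ℒ^{s₁}_ε) and (𝒢ℒ^{s₂}_ε), defined by minimizing the Ginzburg-Landau energies GL^s_ε(w) = ½∫(|∇w|² + (s/ε²)W(w)) over fields w with prescribed rescaled Jacobian, are variationally equivalent. In particular, for the relation 𝒢ℒ^{s₂} ⪯ 𝒢ℒ^{s₁} the change of scale δ_ε = ε(s₂/s₁)^{1/2} works: for any sequence (pₙ) with 𝒢ℒ^{s₁}_{εₙ}(pₙ) ≤ C, setting qₙ = pₙ · |log εₙ|^{h−1}/|log δ_{εₙ}|^{h−1} yields limsupₙ (𝒢ℒ^{s₂}_{δ_{εₙ}}(qₙ) − 𝒢ℒ^{s₁}_{εₙ}(pₙ)) ≤ 0 and d(pₙ, qₙ) → 0 whenever (pₙ) is bounded. -/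

import Mathlib

open MeasureTheory Filter

noncomputable section

/-- Partial derivative in the first coordinate direction. -/
def pd1 (f : ℝ × ℝ → ℝ) (x : ℝ × ℝ) : ℝ := fderiv ℝ f x (1, 0)

/-- Partial derivative in the second coordinate direction. -/
def pd2 (f : ℝ × ℝ → ℝ) (x : ℝ × ℝ) : ℝ := fderiv ℝ f x (0, 1)

/-- Lipschitz functions with compact support contained in `Ω` (the space `C^{0,1}_c(Ω)`). -/
def IsLipc (Ω : Set (ℝ × ℝ)) (φ : ℝ × ℝ → ℝ) : Prop :=
  (∃ K, LipschitzWith K φ) ∧ HasCompactSupport φ ∧ tsupport φ ⊆ Ω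

/-- The unit ball of `C^{0,1}_c(Ω)`, used to compute the dual norm of `X = (C^{0,1}_c(Ω))*`. -/
def IsTestFn (Ω : Set (ℝ × ℝ)) (φ : ℝ × ℝ → ℝ) : Prop :=
  LipschitzWith 1 φ ∧ (∀ x, |φ x| ≤ 1) ∧ HasCompactSupport φ ∧ tsupport φ ⊆ Ω

/-- Elements of `X = (C^{0,1}_c(Ω))*` are modeled as real-valued functionals on test
functions. -/
abbrev XF : Type := (ℝ × ℝ → ℝ) → ℝ

/-- The dual (flat) distance on `X = (C^{0,1}_c(Ω))*`. -/
def dFlat (Ω : Set (ℝ × ℝ)) (T S : XF) : ℝ :=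
  sSup {r : ℝ | ∃ φ, IsTestFn Ω φ ∧ r = T φ - S φ}

/-- A sequence is unbounded with respect to the (pseudo)distance `d`. -/
def SeqUnboundedD {Y : Type*} (d : Y → Y → ℝ) (p : ℕ → Y) : Prop :=
  ¬ ∃ R : ℝ, ∀ m n, d (p m) (p n) ≤ R

/-- `PrecWithD d δ G F`: the order relation `(G_ε) ⪯ (F_ε)` (with respect to the distance
`d`), realized by the specific continuous increasing reparametrization `δ` with `δ 0 = 0`. -/
def PrecWithD {Y : Type*} (d : Y → Y → ℝ) (δ : ℝ → ℝ) (G F : ℝ → Y → EReal) : Prop :=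
  ContinuousOn δ (Set.Ici 0) ∧ StrictMonoOn δ (Set.Ici 0) ∧ δ 0 = 0 ∧
    ∀ ε : ℕ → ℝ, (∀ n, 0 < ε n) → Tendsto ε atTop (nhds 0) →
      ∀ p : ℕ → Y, ∀ C : ℝ, (∀ n, F (ε n) (p n) ≤ (C : EReal)) →
        ∃ q : ℕ → Y,
          limsup (fun n => G (δ (ε n)) (q n) - F (ε n) (p n)) atTop ≤ (0 : EReal) ∧
            ((SeqUnboundedD d p ∧ SeqUnboundedD d q) ∨
              Tendsto (fun n => d (p n) (q n)) atTop (nhds 0))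

/-- The order relation `(G_ε) ⪯ (F_ε)` with respect to the distance `d`. -/
def PrecD {Y : Type*} (d : Y → Y → ℝ) (G F : ℝ → Y → EReal) : Prop :=
  ∃ δ : ℝ → ℝ, PrecWithD d δ G F

/-- Variational equivalence with respect to the distance `d`. -/
def VarEquivD {Y : Type*} (d : Y → Y → ℝ) (F G : ℝ → Y → EReal) : Prop :=
  PrecD d F G ∧ PrecD d G F

/-- H¹(Ω;ℝ²) membership (modeled as: differentiable on `Ω`, with the function and its
differential in `L²(Ω)`). -/
def MemH1 (Ω : Set (ℝ × ℝ)) (w : ℝ × ℝ → ℝ × ℝ) : Prop :=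
  MemLp w 2 (volume.restrict Ω) ∧ (∀ x ∈ Ω, DifferentiableAt ℝ w x) ∧
    MemLp (fun x => fderiv ℝ w x) 2 (volume.restrict Ω)

/-- The distributional action of the Jacobian `Jw = det ∇w` on a test function:
`⟨Jw, φ⟩ = −∫_Ω ( w₁ (w₂)_{x₂} φ_{x₁} − w₁ (w₂)_{x₁} φ_{x₂} ) dx`. -/
def Jpairing (Ω : Set (ℝ × ℝ)) (w : ℝ × ℝ → ℝ × ℝ) (φ : ℝ × ℝ → ℝ) : ℝ :=
  -∫ x in Ω, ((w x).1 * pd2 (fun y => (w y).2) x * pd1 φ x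
      - (w x).1 * pd1 (fun y => (w y).2) x * pd2 φ x)

/-- The Ginzburg–Landau energy `GL^s_ε(w) = ½ ∫_Ω ( |∇w|² + (s/ε²) (1−|w|)² )`. -/
def GLE (s ε : ℝ) (Ω : Set (ℝ × ℝ)) (w : ℝ × ℝ → ℝ × ℝ) : ℝ :=
  (1 / 2) * ∫ x in Ω, (‖fderiv ℝ w x‖ ^ 2 + (s / ε ^ 2) * (1 - ‖w x‖) ^ 2)

/-- The rescaled Ginzburg–Landau functional on `X`:
`𝒢ℒ^s_ε(μ) = |log ε|^{−h} inf { GL^s_ε(w) : w ∈ H¹(Ω;ℝ²), Jw/(π |log ε|^{h−1}) = μ }`,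
with `inf ∅ = +∞`. -/
def GLF (s h : ℝ) (Ω : Set (ℝ × ℝ)) : ℝ → XF → EReal := fun ε μ =>
  sInf {E : EReal | ∃ w : ℝ × ℝ → ℝ × ℝ, MemH1 Ω w ∧
    (∀ φ, IsLipc Ω φ → Jpairing Ω w φ = Real.pi * |Real.log ε| ^ (h - 1) * μ φ) ∧
    E = ((GLE s ε Ω w / |Real.log ε| ^ h : ℝ) : EReal)}

/-!
`GL^s_ε` depends on `(s, ε)` only through `s / ε²`, so with `δ = ε √(s₂/s₁)` the energies
`GL^{s₁}_ε` and `GL^{s₂}_δ` coincide. Hence a field competing for `𝒢ℒ^{s₁}_ε(μ)` also competes for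
`𝒢ℒ^{s₂}_δ(c μ)`, where `c = |log ε|^{h-1} / |log δ|^{h-1}` renormalises the Jacobian constraint,
and the two rescaled infima differ by the factor `(|log ε| / |log δ|)^h → 1`.

For the distance, `c - 1 = O(1 / |log ε|)`, while a field of energy `≲ |log ε|^h` has
`|Jw(φ)| ≲ |log ε|^{h/2}` on test functions (weighted AM–GM, with `∫ |w|²` controlled by the
potential term), so `d(μ, c μ) ≲ |log ε|^{-h/2} → 0`. Exchanging `s₁` and `s₂` gives the reverse
relation.
-/

section Energy

variable {Ω : Set (ℝ × ℝ)} {w : ℝ × ℝ → ℝ × ℝ}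

lemma GLE_nonneg {s : ℝ} (hs : 0 ≤ s) (ε : ℝ) : 0 ≤ GLE s ε Ω w :=
  mul_nonneg (by norm_num) <| integral_nonneg fun x => by positivity

lemma GLE_eq_of_div_sq_eq {s ε s' ε' : ℝ} (h : s / ε ^ 2 = s' / ε' ^ 2) :
    GLE s ε Ω w = GLE s' ε' Ω w := by
  simp only [GLE, h]

lemma GLF_le_of_memH1 {s h ε : ℝ} {μ : XF} (hw : MemH1 Ω w)
    (hJ : ∀ φ, IsLipc Ω φ → Jpairing Ω w φ = Real.pi * |Real.log ε| ^ (h - 1) * μ φ) :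
    GLF s h Ω ε μ ≤ ((GLE s ε Ω w / |Real.log ε| ^ h : ℝ) : EReal) :=
  sInf_le ⟨w, hw, hJ, rfl⟩

lemma GLF_nonneg {s : ℝ} (hs : 0 ≤ s) (h ε : ℝ) (μ : XF) : 0 ≤ GLF s h Ω ε μ := by
  refine le_sInf ?_
  rintro E ⟨w, -, -, rfl⟩
  exact EReal.coe_nonneg.2 <|
    div_nonneg (GLE_nonneg hs ε) (Real.rpow_nonneg (abs_nonneg _) h)

lemma exists_GLE_lt_of_GLF_lt {s h ε t : ℝ} {μ : XF} (hL : 0 < |Real.log ε|)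
    (ht : GLF s h Ω ε μ < t) :
    ∃ w, MemH1 Ω w ∧
      (∀ φ, IsLipc Ω φ → Jpairing Ω w φ = Real.pi * |Real.log ε| ^ (h - 1) * μ φ) ∧
      GLE s ε Ω w < t * |Real.log ε| ^ h := by
  obtain ⟨_, ⟨w, hw, hJ, rfl⟩, hlt⟩ := sInf_lt_iff.1 ht
  refine ⟨w, hw, hJ, ?_⟩
  rwa [EReal.coe_lt_coe_iff, div_lt_iff₀ (Real.rpow_pos_of_pos hL h)] at hlt

lemma GLF_smul_le {s s' h ε ε' F : ℝ} {μ : XF} (hL : 0 < |Real.log ε|)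
    (hL' : 0 < |Real.log ε'|) (hsε : s / ε ^ 2 = s' / ε' ^ 2) (hF : GLF s h Ω ε μ = F) :
    GLF s' h Ω ε' ((|Real.log ε| ^ (h - 1) / |Real.log ε'| ^ (h - 1)) • μ)
      ≤ ((F * (|Real.log ε| ^ h / |Real.log ε'| ^ h) : ℝ) : EReal) := by
  set ρ := |Real.log ε| ^ h / |Real.log ε'| ^ h
  have hρ : 0 < ρ := by positivity
  refine EReal.le_of_forall_lt_iff_le.1 fun z hz => ?_
  have hFz : GLF s h Ω ε μ < ((z / ρ : ℝ) : EReal) := by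
    rw [hF, EReal.coe_lt_coe_iff, lt_div_iff₀ hρ]
    exact EReal.coe_lt_coe_iff.1 hz
  obtain ⟨w, hw, hJ, hE⟩ := exists_GLE_lt_of_GLF_lt hL hFz
  have hJ' : ∀ φ, IsLipc Ω φ → Jpairing Ω w φ = Real.pi * |Real.log ε'| ^ (h - 1) *
      ((|Real.log ε| ^ (h - 1) / |Real.log ε'| ^ (h - 1)) • μ) φ := by
    intro φ hφ
    have : 0 < |Real.log ε'| ^ (h - 1) := by positivity
    rw [hJ φ hφ, Pi.smul_apply, smul_eq_mul]
    field_simp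
  refine (GLF_le_of_memH1 hw hJ').trans (EReal.coe_le_coe_iff.2 ?_)
  rw [← GLE_eq_of_div_sq_eq hsε, div_le_iff₀ (by positivity)]
  calc GLE s ε Ω w ≤ z / ρ * |Real.log ε| ^ h := hE.le
    _ = z * |Real.log ε'| ^ h := by simp only [ρ]; field_simp

end Energy

section Jacobian

variable {Ω : Set (ℝ × ℝ)} {w : ℝ × ℝ → ℝ × ℝ}

lemma abs_pd1_le (f : ℝ × ℝ → ℝ) (x : ℝ × ℝ) : |pd1 f x| ≤ ‖fderiv ℝ f x‖ := by
  simpa [pd1, Prod.norm_def] using (fderiv ℝ f x).le_opNorm (1, 0)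

lemma abs_pd2_le (f : ℝ × ℝ → ℝ) (x : ℝ × ℝ) : |pd2 f x| ≤ ‖fderiv ℝ f x‖ := by
  simpa [pd2, Prod.norm_def] using (fderiv ℝ f x).le_opNorm (0, 1)

lemma norm_fderiv_snd_le {x : ℝ × ℝ} (hw : DifferentiableAt ℝ w x) :
    ‖fderiv ℝ (fun y => (w y).2) x‖ ≤ ‖fderiv ℝ w x‖ := by
  rw [hw.hasFDerivAt.snd.fderiv]
  refine ((ContinuousLinearMap.snd ℝ ℝ ℝ).opNorm_comp_le _).trans ?_
  exact mul_le_of_le_one_left (norm_nonneg _) (ContinuousLinearMap.norm_snd_le ℝ ℝ ℝ)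

lemma two_mul_le_mul_sq_add_sq_div {a b l : ℝ} (hl : 0 < l) :
    2 * (a * b) ≤ l * a ^ 2 + b ^ 2 / l := by
  rw [← sub_nonneg]
  have : l * a ^ 2 + b ^ 2 / l - 2 * (a * b) = (l * a - b) ^ 2 / l := by
    field_simp
    ring
  rw [this]
  positivity

lemma abs_jacobian_integrand_le {φ : ℝ × ℝ → ℝ} (hφ : LipschitzWith 1 φ) {x : ℝ × ℝ}
    (hw : DifferentiableAt ℝ w x) :
    |(w x).1 * pd2 (fun y => (w y).2) x * pd1 φ x - (w x).1 * pd1 (fun y => (w y).2) x * pd2 φ x|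
      ≤ 2 * (‖w x‖ * ‖fderiv ℝ w x‖) := by
  have hφ' : ‖fderiv ℝ φ x‖ ≤ 1 := by simpa using norm_fderiv_le_of_lipschitz ℝ hφ (x₀ := x)
  have hw1 : |(w x).1| ≤ ‖w x‖ := norm_fst_le (w x)
  have hw2 := norm_fderiv_snd_le hw
  have h1 := (abs_pd1_le φ x).trans hφ'
  have h2 := (abs_pd2_le φ x).trans hφ'
  have h3 := (abs_pd1_le (fun y => (w y).2) x).trans hw2
  have h4 := (abs_pd2_le (fun y => (w y).2) x).trans hw2
  have t1 : |(w x).1 * pd2 (fun y => (w y).2) x * pd1 φ x| ≤ ‖w x‖ * ‖fderiv ℝ w x‖ * 1 := by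
    simp only [abs_mul]
    gcongr
  have t2 : |(w x).1 * pd1 (fun y => (w y).2) x * pd2 φ x| ≤ ‖w x‖ * ‖fderiv ℝ w x‖ * 1 := by
    simp only [abs_mul]
    gcongr
  linarith [abs_sub ((w x).1 * pd2 (fun y => (w y).2) x * pd1 φ x)
    ((w x).1 * pd1 (fun y => (w y).2) x * pd2 φ x)]

lemma integrable_norm_sq (hw : MemH1 Ω w) :
    Integrable (fun x => ‖w x‖ ^ 2) (volume.restrict Ω) :=
  hw.1.norm.integrable_sq

lemma integrable_norm_fderiv_sq (hw : MemH1 Ω w) :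
    Integrable (fun x => ‖fderiv ℝ w x‖ ^ 2) (volume.restrict Ω) :=
  hw.2.2.norm.integrable_sq

lemma abs_Jpairing_le (hΩ : IsOpen Ω) (hw : MemH1 Ω w) {φ : ℝ × ℝ → ℝ}
    (hφ : LipschitzWith 1 φ) {l : ℝ} (hl : 0 < l) :
    |Jpairing Ω w φ| ≤ l * (∫ x in Ω, ‖w x‖ ^ 2) + (∫ x in Ω, ‖fderiv ℝ w x‖ ^ 2) / l := by
  have hint := ((integrable_norm_sq hw).const_mul l).add
    ((integrable_norm_fderiv_sq hw).div_const l)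
  calc |Jpairing Ω w φ|
      = ‖∫ x in Ω, ((w x).1 * pd2 (fun y => (w y).2) x * pd1 φ x
          - (w x).1 * pd1 (fun y => (w y).2) x * pd2 φ x)‖ := by
        rw [Jpairing, abs_neg, Real.norm_eq_abs]
    _ ≤ ∫ x in Ω, (l * ‖w x‖ ^ 2 + ‖fderiv ℝ w x‖ ^ 2 / l) := by
        refine norm_integral_le_of_norm_le hint ?_
        filter_upwards [self_mem_ae_restrict hΩ.measurableSet] with x hx
        exact (abs_jacobian_integrand_le hφ (hw.2.1 x hx)).trans
          (two_mul_le_mul_sq_add_sq_div hl)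
    _ = l * (∫ x in Ω, ‖w x‖ ^ 2) + (∫ x in Ω, ‖fderiv ℝ w x‖ ^ 2) / l := by
        rw [integral_add ((integrable_norm_sq hw).const_mul l)
          ((integrable_norm_fderiv_sq hw).div_const l), integral_const_mul, integral_div]

end Jacobian

section Bounds

variable {Ω : Set (ℝ × ℝ)} {w : ℝ × ℝ → ℝ × ℝ}

lemma integrable_one_sub_norm_sq (hΩ : Bornology.IsBounded Ω) (hw : MemH1 Ω w) :
    Integrable (fun x => (1 - ‖w x‖) ^ 2) (volume.restrict Ω) :=
  haveI : IsFiniteMeasure (volume.restrict Ω) :=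
    isFiniteMeasure_restrict.2 (hΩ.measure_lt_top (μ := volume)).ne
  ((memLp_const 1).sub hw.1.norm).integrable_sq

lemma GLE_eq_half_add (hΩ : Bornology.IsBounded Ω) (hw : MemH1 Ω w) (s ε : ℝ) :
    GLE s ε Ω w = (1 / 2) * ((∫ x in Ω, ‖fderiv ℝ w x‖ ^ 2)
      + s / ε ^ 2 * ∫ x in Ω, (1 - ‖w x‖) ^ 2) := by
  rw [GLE, integral_add (integrable_norm_fderiv_sq hw)
    ((integrable_one_sub_norm_sq hΩ hw).const_mul _), integral_const_mul]

lemma integral_norm_sq_le (hΩ : Bornology.IsBounded Ω) (hw : MemH1 Ω w) :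
    ∫ x in Ω, ‖w x‖ ^ 2 ≤ 2 * volume.real Ω + 2 * ∫ x in Ω, (1 - ‖w x‖) ^ 2 := by
  have : IsFiniteMeasure (volume.restrict Ω) :=
    isFiniteMeasure_restrict.2 (hΩ.measure_lt_top (μ := volume)).ne
  have hint := (integrable_one_sub_norm_sq hΩ hw).const_mul 2
  calc ∫ x in Ω, ‖w x‖ ^ 2 ≤ ∫ x in Ω, (2 + 2 * (1 - ‖w x‖) ^ 2) :=
        integral_mono (integrable_norm_sq hw) ((integrable_const 2).add hint)
          fun x => by nlinarith [sq_nonneg (‖w x‖ - 2)]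
    _ = 2 * volume.real Ω + 2 * ∫ x in Ω, (1 - ‖w x‖) ^ 2 := by
        rw [integral_add (integrable_const 2) hint, integral_const_mul, setIntegral_const,
          smul_eq_mul, mul_comm]

/-- Take `l = |log ε|^{h/2}` in `abs_Jpairing_le`; the hypothesis on `ε` lets the potential term
bound `∫ |w|²` independently of `ε`. -/
lemma abs_apply_le_of_GLF_lt (hΩo : IsOpen Ω) (hΩb : Bornology.IsBounded Ω) {s h ε M : ℝ}
    {μ : XF} (hs : 0 < s) (hL : 0 < |Real.log ε|)
    (hε : 4 * M * (ε ^ 2 * |Real.log ε| ^ h) ≤ s) (hμ : GLF s h Ω ε μ < M)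
    {φ : ℝ × ℝ → ℝ} (hφ : IsTestFn Ω φ) :
    |μ φ| ≤ (2 * volume.real Ω + 1 + 2 * M) / Real.pi * |Real.log ε| ^ (1 - h / 2) := by
  obtain ⟨w, hw, hJ, hE⟩ := exists_GLE_lt_of_GLF_lt hL hμ
  set L := |Real.log ε|
  set A := ∫ x in Ω, ‖fderiv ℝ w x‖ ^ 2
  set B := ∫ x in Ω, (1 - ‖w x‖) ^ 2
  rw [GLE_eq_half_add hΩb hw] at hE
  have hA0 : 0 ≤ A := integral_nonneg fun x => sq_nonneg _
  have hB0 : 0 ≤ B := integral_nonneg fun x => sq_nonneg _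
  have hsB0 : 0 ≤ s / ε ^ 2 * B := by positivity
  have hε0 : ε ≠ 0 := by rintro rfl; simp [L] at hL
  have hA : A ≤ 2 * M * L ^ h := by linarith
  have hB : s * (2 * B) ≤ s * 1 := by
    have hsB : s * B = s / ε ^ 2 * B * ε ^ 2 := by field_simp
    nlinarith [mul_le_mul_of_nonneg_right (by linarith : s / ε ^ 2 * B ≤ 2 * M * L ^ h)
      (sq_nonneg ε)]
  have hU : ∫ x in Ω, ‖w x‖ ^ 2 ≤ 2 * volume.real Ω + 1 := by
    linarith [integral_norm_sq_le hΩb hw, le_of_mul_le_mul_left hB hs]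
  set l := L ^ (h / 2)
  have hl : 0 < l := by positivity
  have hll : L ^ h = l * l := by rw [← Real.rpow_add hL]; ring_nf
  have hJφ : |Jpairing Ω w φ| ≤ (2 * volume.real Ω + 1 + 2 * M) * l := by
    refine (abs_Jpairing_le hΩo hw hφ.1 hl).trans ?_
    have : A / l ≤ 2 * M * l := by
      rw [div_le_iff₀ hl]; rw [hll] at hA; linarith
    nlinarith
  have hπL : 0 < Real.pi * L ^ (h - 1) := by positivity
  have hμφ : μ φ = Jpairing Ω w φ / (Real.pi * L ^ (h - 1)) := by
    rw [hJ φ ⟨⟨1, hφ.1⟩, hφ.2.2.1, hφ.2.2.2⟩]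
    field_simp
  rw [hμφ, abs_div, abs_of_pos hπL, div_le_iff₀ hπL]
  calc |Jpairing Ω w φ| ≤ (2 * volume.real Ω + 1 + 2 * M) * l := hJφ
    _ = (2 * volume.real Ω + 1 + 2 * M) / Real.pi * L ^ (1 - h / 2)
        * (Real.pi * L ^ (h - 1)) := by
      rw [show 1 - h / 2 = h / 2 - (h - 1) by ring, Real.rpow_sub hL]
      simp only [l]
      field_simp

lemma abs_dFlat_le {p q : XF} {ρ : ℝ} (hpq : ∀ φ, IsTestFn Ω φ → |p φ - q φ| ≤ ρ) :
    |dFlat Ω p q| ≤ ρ := by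
  have h0 : IsTestFn Ω 0 := by
    refine ⟨LipschitzWith.const' 0, fun x => by simp, HasCompactSupport.zero, ?_⟩
    simp
  have hbdd : BddAbove {r : ℝ | ∃ φ, IsTestFn Ω φ ∧ r = p φ - q φ} := by
    refine ⟨ρ, ?_⟩
    rintro r ⟨φ, hφ, rfl⟩
    exact (abs_le.1 (hpq φ hφ)).2
  refine abs_le.2 ⟨?_, csSup_le ⟨_, 0, h0, rfl⟩ ?_⟩
  · exact (abs_le.1 (hpq 0 h0)).1.trans (le_csSup hbdd ⟨0, h0, rfl⟩)
  · rintro r ⟨φ, hφ, rfl⟩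
    exact (abs_le.1 (hpq φ hφ)).2

end Bounds

section LogAsymptotics

open Asymptotics Topology

variable {ι : Type*} {l : Filter ι} {ε : ι → ℝ}

lemma tendsto_abs_log_atTop (hε : Tendsto ε l (𝓝[>] 0)) :
    Tendsto (fun i => |Real.log (ε i)|) l atTop :=
  tendsto_abs_atBot_atTop.comp (Real.tendsto_log_nhdsGT_zero.comp hε)

lemma abs_log_mul_eventuallyEq (hε : Tendsto ε l (𝓝[>] 0)) {r : ℝ}
    (hr : 0 < r) : ∀ᶠ i in l, |Real.log (ε i * r)| = |Real.log (ε i)| - Real.log r := by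
  filter_upwards [(Real.tendsto_log_nhdsGT_zero.comp hε).eventually_lt_atBot (-|Real.log r|),
    hε self_mem_nhdsWithin] with i (hi : Real.log (ε i) < _) (hεi : 0 < ε i)
  have hlog : Real.log (ε i) < 0 := by linarith [abs_nonneg (Real.log r)]
  rw [Real.log_mul hεi.ne' hr.ne', abs_of_neg hlog,
    abs_of_neg (by linarith [le_abs_self (Real.log r)] : Real.log (ε i) + Real.log r < 0)]
  ring

lemma tendsto_abs_log_div_abs_log_mul (hε : Tendsto ε l (𝓝[>] 0)) {r : ℝ}
    (hr : 0 < r) :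
    Tendsto (fun i => |Real.log (ε i)| / |Real.log (ε i * r)|) l (𝓝 1) := by
  have hL := tendsto_abs_log_atTop hε
  have h : Tendsto (fun i => 1 - Real.log r * |Real.log (ε i)|⁻¹) l (𝓝 1) := by
    simpa using (hL.inv_tendsto_atTop.const_mul (Real.log r)).const_sub 1
  have h' := h.inv₀ one_ne_zero
  rw [inv_one] at h'
  refine h'.congr' ?_
  filter_upwards [abs_log_mul_eventuallyEq hε hr, hL.eventually_gt_atTop 0] with i hi hLi
  rw [hi]
  field_simp

/-- `t ↦ t^β` is differentiable at `1`, and `|log ε| / |log (ε r)| - 1 = log r / |log (ε r)|`. -/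
lemma isBigO_rpow_abs_log_div_sub_one (hε : Tendsto ε l (𝓝[>] 0)) {r : ℝ}
    (hr : 0 < r) (β : ℝ) :
    (fun i => |Real.log (ε i)| ^ β / |Real.log (ε i * r)| ^ β - 1)
      =O[l] fun i => |Real.log (ε i)|⁻¹ := by
  have hx := tendsto_abs_log_div_abs_log_mul hε hr
  have hpow : (fun i => (|Real.log (ε i)| / |Real.log (ε i * r)|) ^ β - 1)
      =O[l] fun i => |Real.log (ε i)| / |Real.log (ε i * r)| - 1 := by
    simpa [Function.comp_def] using
      ((Real.hasDerivAt_rpow_const (p := β) (Or.inl one_ne_zero)).isBigO_sub.comp_tendsto hx)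
  have hsub : (fun i => |Real.log (ε i)| / |Real.log (ε i * r)| - 1)
      =O[l] fun i => |Real.log (ε i)|⁻¹ := by
    have hO := ((hx.isBigO_one ℝ).const_mul_left (Real.log r)).mul
      (isBigO_refl (fun i => |Real.log (ε i)|⁻¹) l)
    simp only [one_mul] at hO
    refine hO.congr' ?_ EventuallyEq.rfl
    filter_upwards [abs_log_mul_eventuallyEq hε hr,
      (tendsto_abs_log_atTop hε).eventually_gt_atTop 0,
      (tendsto_abs_log_atTop hε).eventually_gt_atTop (Real.log r)] with i hi hL hLr
    have : |Real.log (ε i)| - Real.log r ≠ 0 := by linarith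
    rw [hi]
    field_simp
    ring
  refine (hpow.trans hsub).congr' ?_ EventuallyEq.rfl
  exact Eventually.of_forall fun i => by
    dsimp only
    rw [Real.div_rpow (abs_nonneg _) (abs_nonneg _)]

lemma tendsto_sq_mul_abs_log_rpow (hε : Tendsto ε l (𝓝[>] 0)) (h : ℝ) :
    Tendsto (fun i => ε i ^ 2 * |Real.log (ε i)| ^ h) l (𝓝 0) := by
  refine ((tendsto_rpow_mul_exp_neg_mul_atTop_nhds_zero h 2 two_pos).comp
    (tendsto_abs_log_atTop hε)).congr' ?_
  filter_upwards [hε self_mem_nhdsWithin,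
    (Real.tendsto_log_nhdsGT_zero.comp hε).eventually_lt_atBot 0]
    with i (hεi : 0 < ε i) (hlog : Real.log (ε i) < 0)
  rw [Function.comp_apply, abs_of_neg hlog,
    show -2 * -Real.log (ε i) = Real.log (ε i) * 2 by ring, Real.exp_mul, Real.exp_log hεi,
    show (2 : ℝ) = (2 : ℕ) by norm_num, Real.rpow_natCast, mul_comm]

end LogAsymptotics

section RescaledFunctionals

open Asymptotics Topology

variable {ι : Type*} {l : Filter ι} {ε : ι → ℝ} {Ω : Set (ℝ × ℝ)} {s s' h r C : ℝ}
  {p : ι → XF}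

lemma div_sq_eq_div_mul_sq {ε : ℝ} (hε : ε ≠ 0) (hr : r ≠ 0) (hsr : s' = s * r ^ 2) :
    s / ε ^ 2 = s' / (ε * r) ^ 2 := by
  rw [hsr]
  field_simp

lemma limsup_GLF_smul_sub_GLF_le_zero [l.NeBot] (hs : 0 ≤ s) (hr : 0 < r)
    (hsr : s' = s * r ^ 2) (hε : Tendsto ε l (𝓝[>] 0)) (hp : ∀ i, GLF s h Ω (ε i) (p i) ≤ C) :
    limsup (fun i => GLF s' h Ω (ε i * r)
        ((|Real.log (ε i)| ^ (h - 1) / |Real.log (ε i * r)| ^ (h - 1)) • p i)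
      - GLF s h Ω (ε i) (p i)) l ≤ 0 := by
  set f : ι → ℝ := fun i => (GLF s h Ω (ε i) (p i)).toReal
  set ρ : ι → ℝ := fun i => |Real.log (ε i)| ^ h / |Real.log (ε i * r)| ^ h
  have hf : ∀ i, GLF s h Ω (ε i) (p i) = f i := fun i =>
    (EReal.coe_toReal ((hp i).trans_lt (EReal.coe_lt_top C)).ne
      (ne_bot_of_le_ne_bot EReal.zero_ne_bot (GLF_nonneg hs h (ε i) (p i)))).symm
  have hf0 : ∀ i, 0 ≤ f i := fun i => EReal.coe_nonneg.1 (hf i ▸ GLF_nonneg hs h (ε i) (p i))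
  have hfC : ∀ i, f i ≤ C := fun i => EReal.coe_le_coe_iff.1 (hf i ▸ hp i)
  have hρ : Tendsto ρ l (𝓝 1) := by
    have := ((Real.continuousAt_rpow_const 1 h (Or.inl one_ne_zero)).tendsto.comp
      (tendsto_abs_log_div_abs_log_mul hε hr))
    simp only [Real.one_rpow] at this
    exact this.congr fun i => Real.div_rpow (abs_nonneg _) (abs_nonneg _) h
  have hbound : ∀ᶠ i in l, GLF s' h Ω (ε i * r)
        ((|Real.log (ε i)| ^ (h - 1) / |Real.log (ε i * r)| ^ (h - 1)) • p i)
      - GLF s h Ω (ε i) (p i) ≤ ((f i * (ρ i - 1) : ℝ) : EReal) := by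
    have hL := tendsto_abs_log_atTop hε
    filter_upwards [hε self_mem_nhdsWithin, hL.eventually_gt_atTop 0,
      hL.eventually_gt_atTop (Real.log r), abs_log_mul_eventuallyEq hε hr]
      with i (hεi : 0 < ε i) hLi hLri hL'i
    have hL' : 0 < |Real.log (ε i * r)| := by rw [hL'i]; linarith
    rw [hf i, mul_sub, mul_one, EReal.coe_sub]
    exact EReal.sub_le_sub (GLF_smul_le hLi hL'
      (div_sq_eq_div_mul_sq hεi.ne' hr.ne' hsr) (hf i)) le_rfl
  have htend : Tendsto (fun i => f i * (ρ i - 1)) l (𝓝 0) := by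
    refine squeeze_zero_norm (fun i => ?_) (by simpa using ((hρ.sub_const 1).norm.const_mul C))
    rw [norm_mul, Real.norm_of_nonneg (hf0 i)]
    exact mul_le_mul_of_nonneg_right (hfC i) (norm_nonneg _)
  calc _ ≤ limsup (fun i => ((f i * (ρ i - 1) : ℝ) : EReal)) l := limsup_le_limsup hbound
    _ = 0 := (EReal.tendsto_coe.2 htend).limsup_eq

lemma tendsto_dFlat_smul (hΩo : IsOpen Ω) (hΩb : Bornology.IsBounded Ω) (hs : 0 < s)
    (hh : 0 < h) (hr : 0 < r) (hε : Tendsto ε l (𝓝[>] 0))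
    (hp : ∀ i, GLF s h Ω (ε i) (p i) ≤ C) :
    Tendsto (fun i => dFlat Ω (p i)
      ((|Real.log (ε i)| ^ (h - 1) / |Real.log (ε i * r)| ^ (h - 1)) • p i)) l (𝓝 0) := by
  set L : ι → ℝ := fun i => |Real.log (ε i)|
  set c : ι → ℝ := fun i => L i ^ (h - 1) / |Real.log (ε i * r)| ^ (h - 1)
  set M : ℝ := |C| + 1
  set K : ℝ := (2 * volume.real Ω + 1 + 2 * M) / Real.pi
  have hL := tendsto_abs_log_atTop hε
  have hLpos := hL.eventually_gt_atTop 0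
  have hdecay : Tendsto (fun i => (c i - 1) * L i ^ (1 - h / 2)) l (𝓝 0) := by
    refine IsBigO.trans_tendsto ?_ ((tendsto_rpow_neg_atTop (half_pos hh)).comp hL)
    refine ((isBigO_rpow_abs_log_div_sub_one hε hr (h - 1)).mul
      (isBigO_refl (fun i => L i ^ (1 - h / 2)) l)).congr' EventuallyEq.rfl ?_
    filter_upwards [hLpos] with i hLi
    rw [Function.comp_apply, ← Real.rpow_neg_one, ← Real.rpow_add hLi]
    ring_nf
  have hsmall : ∀ᶠ i in l, 4 * M * (ε i ^ 2 * L i ^ h) ≤ s := by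
    have hM : 0 < 4 * M := by positivity
    filter_upwards [(tendsto_sq_mul_abs_log_rpow hε h).eventually_le_const
      (div_pos hs hM)] with i hi
    rwa [le_div_iff₀' hM] at hi
  refine squeeze_zero_norm' ?_ (by simpa using hdecay.norm.const_mul K)
  filter_upwards [hLpos, hsmall] with i hLi hεi
  refine abs_dFlat_le fun φ hφ => ?_
  have hpφ := abs_apply_le_of_GLF_lt hΩo hΩb hs hLi hεi
    ((hp i).trans_lt (EReal.coe_lt_coe_iff.2 (by linarith [le_abs_self C]))) hφ
  rw [Pi.smul_apply, smul_eq_mul, ← one_sub_mul, abs_mul, abs_sub_comm,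
    abs_of_nonneg (Real.rpow_nonneg hLi.le _)]
  exact (mul_le_mul_of_nonneg_left hpφ (abs_nonneg _)).trans_eq (by ring)

end RescaledFunctionals

section Reparametrization

open Topology

variable {Ω : Set (ℝ × ℝ)} {s s' h r C : ℝ} {ε : ℕ → ℝ} {p : ℕ → XF}

lemma GLF_rescale (hΩo : IsOpen Ω) (hΩb : Bornology.IsBounded Ω) (hs : 0 < s) (hh : 0 < h)
    (hr : 0 < r) (hsr : s' = s * r ^ 2) (hε : ∀ n, 0 < ε n) (hε0 : Tendsto ε atTop (𝓝 0))
    (hp : ∀ n, GLF s h Ω (ε n) (p n) ≤ C) :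
    limsup (fun n => GLF s' h Ω (ε n * r)
        ((|Real.log (ε n)| ^ (h - 1) / |Real.log (ε n * r)| ^ (h - 1)) • p n)
      - GLF s h Ω (ε n) (p n)) atTop ≤ 0 ∧
    Tendsto (fun n => dFlat Ω (p n)
      ((|Real.log (ε n)| ^ (h - 1) / |Real.log (ε n * r)| ^ (h - 1)) • p n)) atTop (𝓝 0) :=
  have hε' : Tendsto ε atTop (𝓝[>] 0) :=
    tendsto_nhdsWithin_iff.2 ⟨hε0, Eventually.of_forall hε⟩
  ⟨limsup_GLF_smul_sub_GLF_le_zero hs.le hr hsr hε' hp,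
    tendsto_dFlat_smul hΩo hΩb hs hh hr hε' hp⟩

lemma precWithD_GLF_mul (hΩo : IsOpen Ω) (hΩb : Bornology.IsBounded Ω) (hs : 0 < s)
    (hh : 0 < h) (hr : 0 < r) (hsr : s' = s * r ^ 2) :
    PrecWithD (dFlat Ω) (fun ε => ε * r) (GLF s' h Ω) (GLF s h Ω) :=
  ⟨(continuous_id.mul continuous_const).continuousOn,
    fun _ _ _ _ hxy => mul_lt_mul_of_pos_right hxy hr, zero_mul r,
    fun _ hε hε0 _ _ hp =>
      have hresc := GLF_rescale hΩo hΩb hs hh hr hsr hε hε0 hp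
      ⟨_, hresc.1, Or.inr hresc.2⟩⟩

end Reparametrization

/-- For `0 < s₁ < s₂`, the rescaled Ginzburg–Landau families `(𝒢ℒ^{s₁}_ε)` and `(𝒢ℒ^{s₂}_ε)`
are variationally equivalent. Moreover, for the relation `𝒢ℒ^{s₂} ⪯ 𝒢ℒ^{s₁}` the change of
scale `δ_ε = ε (s₂/s₁)^{1/2}` works: given `(pₙ)` with `𝒢ℒ^{s₁}_{εₙ}(pₙ) ≤ C`, setting
`qₙ = pₙ · |log εₙ|^{h−1}/|log δ_{εₙ}|^{h−1}` yields
`limsupₙ (𝒢ℒ^{s₂}_{δ_{εₙ}}(qₙ) − 𝒢ℒ^{s₁}_{εₙ}(pₙ)) ≤ 0`, and `d(pₙ, qₙ) → 0` whenever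
`(pₙ)` is bounded. -/
theorem GL_scaling_varEquiv
    (Ω : Set (ℝ × ℝ)) (hΩo : IsOpen Ω) (hΩb : Bornology.IsBounded Ω)
    (h : ℝ) (hh : 1 ≤ h) (s₁ s₂ : ℝ) (hs₁ : 0 < s₁) (hs : s₁ < s₂) :
    VarEquivD (dFlat Ω) (GLF s₁ h Ω) (GLF s₂ h Ω) ∧
    PrecWithD (dFlat Ω) (fun ε => ε * Real.sqrt (s₂ / s₁)) (GLF s₂ h Ω) (GLF s₁ h Ω) ∧
    (∀ ε : ℕ → ℝ, (∀ n, 0 < ε n) → Tendsto ε atTop (nhds 0) →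
      ∀ p : ℕ → XF, ∀ C : ℝ, (∀ n, GLF s₁ h Ω (ε n) (p n) ≤ (C : EReal)) →
        ∀ q : ℕ → XF,
          (∀ n, q n = fun φ =>
            (|Real.log (ε n)| ^ (h - 1) / |Real.log (ε n * Real.sqrt (s₂ / s₁))| ^ (h - 1))
              * p n φ) →
          limsup (fun n =>
              GLF s₂ h Ω (ε n * Real.sqrt (s₂ / s₁)) (q n) - GLF s₁ h Ω (ε n) (p n))
            atTop ≤ (0 : EReal) ∧
          ((∃ R : ℝ, ∀ m n, dFlat Ω (p m) (p n) ≤ R) →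
            Tendsto (fun n => dFlat Ω (p n) (q n)) atTop (nhds 0))) := by
  have hs₂ : 0 < s₂ := hs₁.trans hs
  have hh₀ : 0 < h := by linarith
  have hsr : ∀ {a b : ℝ}, 0 < a → 0 < b → b = a * Real.sqrt (b / a) ^ 2 := fun ha hb => by
    rw [Real.sq_sqrt (div_pos hb ha).le]
    field_simp
  have hprec : ∀ {a b : ℝ}, 0 < a → 0 < b →
      PrecWithD (dFlat Ω) (fun ε => ε * Real.sqrt (b / a)) (GLF b h Ω) (GLF a h Ω) :=
    fun ha hb => precWithD_GLF_mul hΩo hΩb ha hh₀ (Real.sqrt_pos.2 (div_pos hb ha)) (hsr ha hb)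
  refine ⟨⟨⟨_, hprec hs₂ hs₁⟩, ⟨_, hprec hs₁ hs₂⟩⟩, hprec hs₁ hs₂,
    fun ε hε hε0 p C hp q hq => ?_⟩
  obtain rfl : q = _ := funext hq
  obtain ⟨hlimsup, hdist⟩ := GLF_rescale hΩo hΩb hs₁ hh₀
    (Real.sqrt_pos.2 (div_pos hs₂ hs₁)) (hsr hs₁ hs₂) hε hε0 hp
  exact ⟨hlimsup, fun _ => hdist⟩
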